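/- BDF2 stability inequality core: let αₙ := ‖(uₙ, u_{n-1})‖ₙ² (BDF2 tuple norms) and Gₙ ≥ 0 satisfy αₙ + Δt Gₙ ≤ α_{n-1} + Δt c αₙ + Δt fₙ + (Δt/2) G_{n-1} for n ≥ 2, with Δt c < 1. Then for all N ≥ 2: α_N + (Δt/2) Σ_{n=2}^N Gₙ ≤ exp(c N Δt/(1 - cΔt)) (α₁ + (Δt/2) G₁ + Δt Σ_{n=2}^N fₙ). -/

import Mathlib

/-!
Put `Tₙ := αₙ + (Δt/2) Gₙ + (Δt/2) ∑_{k=2}^n G_k` (`bdf2Energy`). Telescoping the `G`-terms, the hypothesis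
becomes `Tₙ - Tₙ₋₁ ≤ cΔt αₙ + Δt fₙ ≤ cΔt Tₙ + Δt fₙ`, i.e. `Tₙ ≤ λ (Tₙ₋₁ + Δt fₙ)` with
`λ = (1 - cΔt)⁻¹ ≥ 1`. Iterating gives `T_N ≤ λ^(N-1) (T₁ + Δt ∑ fₙ)`, and
`λ = 1 + cΔt/(1 - cΔt) ≤ exp (cΔt/(1 - cΔt))`.
-/

open Finset

theorem le_pow_mul_add_sum_of_le_mul_add {u b : ℕ → ℝ} {r : ℝ} {m : ℕ} (hr : 1 ≤ r)
    (hb : ∀ n, 0 ≤ b n) (h : ∀ n, m ≤ n → u (n + 1) ≤ r * (u n + b (n + 1))) :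
    ∀ N, m ≤ N → u N ≤ r ^ (N - m) * (u m + ∑ n ∈ Icc (m + 1) N, b n) := by
  intro N hN
  induction N, hN using Nat.le_induction with
  | base => simp
  | succ N hmN ih =>
    have hsum : ∑ n ∈ Icc (m + 1) (N + 1), b n = ∑ n ∈ Icc (m + 1) N, b n + b (N + 1) :=
      sum_Icc_succ_top (by omega) b
    have hexp : N + 1 - m = N - m + 1 := by omega
    have hr_le_pow : r ≤ r ^ (N + 1 - m) := le_self_pow₀ hr (by omega)
    calc u (N + 1) ≤ r * (u N + b (N + 1)) := h N hmN
      _ ≤ r * (r ^ (N - m) * (u m + ∑ n ∈ Icc (m + 1) N, b n) + b (N + 1)) := by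
          gcongr
      _ = r ^ (N + 1 - m) * (u m + ∑ n ∈ Icc (m + 1) N, b n) + r * b (N + 1) := by
          rw [hexp, pow_succ]; ring
      _ ≤ r ^ (N + 1 - m) * (u m + ∑ n ∈ Icc (m + 1) N, b n) + r ^ (N + 1 - m) * b (N + 1) := by
          gcongr; exact hb _
      _ = r ^ (N + 1 - m) * (u m + ∑ n ∈ Icc (m + 1) (N + 1), b n) := by
          rw [hsum]; ring

theorem inv_one_sub_le_exp_div {q : ℝ} (hq : q < 1) : (1 - q)⁻¹ ≤ Real.exp (q / (1 - q)) := by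
  have hpos : 0 < 1 - q := by linarith
  calc (1 - q)⁻¹ = q / (1 - q) + 1 := by field_simp; ring
    _ ≤ Real.exp (q / (1 - q)) := Real.add_one_le_exp _

noncomputable def bdf2Energy (Δt : ℝ) (α G : ℕ → ℝ) (n : ℕ) : ℝ :=
  α n + Δt / 2 * G n + Δt / 2 * ∑ k ∈ Icc 2 n, G k

theorem le_bdf2Energy {Δt : ℝ} {α G : ℕ → ℝ} (hΔt : 0 ≤ Δt) (hG : ∀ n, 0 ≤ G n) (n : ℕ) :
    α n + Δt / 2 * ∑ k ∈ Icc 2 n, G k ≤ bdf2Energy Δt α G n := by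
  have : 0 ≤ Δt / 2 * G n := by have := hG n; positivity
  unfold bdf2Energy
  linarith

theorem one_sub_mul_bdf2Energy_le {Δt c : ℝ} {α G f : ℕ → ℝ} (hΔt : 0 < Δt) (hc : 0 ≤ c)
    (hG : ∀ n, 0 ≤ G n) {n : ℕ} (hn : 1 ≤ n)
    (hrec : α (n + 1) + Δt * G (n + 1)
      ≤ α n + Δt * c * α (n + 1) + Δt * f (n + 1) + (Δt / 2) * G n) :
    (1 - c * Δt) * bdf2Energy Δt α G (n + 1) ≤ bdf2Energy Δt α G n + Δt * f (n + 1) := by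
  have hsum : ∑ k ∈ Icc 2 (n + 1), G k = ∑ k ∈ Icc 2 n, G k + G (n + 1) :=
    sum_Icc_succ_top (by omega) G
  have htelescope : bdf2Energy Δt α G (n + 1) - bdf2Energy Δt α G n
      = α (n + 1) - α n + Δt * G (n + 1) - Δt / 2 * G n := by
    unfold bdf2Energy; rw [hsum]; ring
  have hα_le : c * Δt * α (n + 1) ≤ c * Δt * bdf2Energy Δt α G (n + 1) := by
    have := le_bdf2Energy (α := α) hΔt.le hG (n + 1)
    have : 0 ≤ Δt / 2 * ∑ k ∈ Icc 2 (n + 1), G k := by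
      have := sum_nonneg fun k (_ : k ∈ Icc 2 (n + 1)) => hG k; positivity
    gcongr
    linarith
  linarith

/-- Core stability inequality for the BDF2 scheme. -/
theorem bdf2_stability_core (Δt c : ℝ) (α G f : ℕ → ℝ)
    (hΔt : 0 < Δt) (hc : 0 ≤ c) (hsmall : c * Δt < 1)
    (hα : ∀ n, 0 ≤ α n) (hG : ∀ n, 0 ≤ G n) (hf : ∀ n, 0 ≤ f n)
    (hrec : ∀ n, 2 ≤ n →
      α n + Δt * G n ≤ α (n - 1) + Δt * c * α n + Δt * f n + (Δt / 2) * G (n - 1)) :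
    ∀ N, 2 ≤ N →
      α N + (Δt / 2) * ∑ n ∈ Icc 2 N, G n
        ≤ Real.exp (c * N * Δt / (1 - c * Δt))
            * (α 1 + (Δt / 2) * G 1 + Δt * ∑ n ∈ Icc 2 N, f n) := by
  intro N hN
  have hpos : 0 < 1 - c * Δt := by linarith
  have hlam : 1 ≤ (1 - c * Δt)⁻¹ := one_le_inv₀ hpos |>.mpr (by nlinarith)
  have hstep : ∀ n, 1 ≤ n → bdf2Energy Δt α G (n + 1)
      ≤ (1 - c * Δt)⁻¹ * (bdf2Energy Δt α G n + Δt * f (n + 1)) := fun n hn => by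
    rw [← div_eq_inv_mul, le_div_iff₀' hpos]
    exact one_sub_mul_bdf2Energy_le hΔt hc hG hn (hrec (n + 1) (by omega))
  have hgrowth : (1 - c * Δt)⁻¹ ^ (N - 1) ≤ Real.exp (c * N * Δt / (1 - c * Δt)) := by
    calc (1 - c * Δt)⁻¹ ^ (N - 1) ≤ (1 - c * Δt)⁻¹ ^ N := pow_le_pow_right₀ hlam (by omega)
      _ ≤ Real.exp (c * Δt / (1 - c * Δt)) ^ N := by
          gcongr; exact inv_one_sub_le_exp_div hsmall
      _ = Real.exp (c * N * Δt / (1 - c * Δt)) := by rw [← Real.exp_nat_mul]; ring_nf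
  have hinit : 0 ≤ α 1 + Δt / 2 * G 1 + Δt * ∑ n ∈ Icc 2 N, f n := by
    have := hα 1; have := hG 1; have := sum_nonneg fun n (_ : n ∈ Icc 2 N) => hf n
    positivity
  calc α N + (Δt / 2) * ∑ n ∈ Icc 2 N, G n ≤ bdf2Energy Δt α G N := le_bdf2Energy hΔt.le hG N
    _ ≤ (1 - c * Δt)⁻¹ ^ (N - 1) * (α 1 + Δt / 2 * G 1 + Δt * ∑ n ∈ Icc 2 N, f n) := by
        have := le_pow_mul_add_sum_of_le_mul_add hlam (fun n => mul_nonneg hΔt.le (hf n)) hstep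
          N (by omega)
        simpa [bdf2Energy, mul_sum] using this
    _ ≤ _ := by gcongr
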